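/- There is a quantum strategy winning the CHSH game with probability cos²(π/8): for the shared EPR state |ψ⟩ = (|00⟩+|11⟩)/√2, with Alice measuring σ_z on input 0 and σ_x on input 1, and Bob measuring (σ_z + (−1)^b σ_x)/√2 on input b, the probability that the outcomes x, y satisfy x XOR y = a AND b equals cos²(π/8) for every input pair (a,b). -/

import Mathlib

open Matrix

noncomputable section

/-- Pauli σ_z. -/
def pauliZ : Matrix (Fin 2) (Fin 2) ℂ := !![1, 0; 0, -1]

/-- Pauli σ_x. -/
def pauliX : Matrix (Fin 2) (Fin 2) ℂ := !![0, 1; 1, 0]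

/-- Alice's observable: σ_z on input 0 (`false`), σ_x on input 1 (`true`). -/
def chshAliceObs (a : Bool) : Matrix (Fin 2) (Fin 2) ℂ :=
  if a then pauliX else pauliZ

/-- Bob's observable `(σ_z + (−1)^b σ_x)/√2` on input `b`. -/
def chshBobObs (b : Bool) : Matrix (Fin 2) (Fin 2) ℂ :=
  (((Real.sqrt 2)⁻¹ : ℝ) : ℂ) • (pauliZ + (if b then (-1 : ℂ) else 1) • pauliX)

/-- Spectral projection of a ±1-valued observable `M` (with `M² = 1`) onto the
eigenvalue `+1` for outcome bit `false`, and `−1` for outcome bit `true`. -/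
def outcomeProj (M : Matrix (Fin 2) (Fin 2) ℂ) (x : Bool) :
    Matrix (Fin 2) (Fin 2) ℂ :=
  ((2 : ℂ))⁻¹ • (1 + (if x then (-1 : ℂ) else 1) • M)

/-- The EPR state `(|00⟩ + |11⟩)/√2` as a vector on `Fin 2 × Fin 2`. -/
def eprVec : Fin 2 × Fin 2 → ℂ :=
  fun p => if p.1 = p.2 then (((Real.sqrt 2)⁻¹ : ℝ) : ℂ) else 0

end

/-!
For the maximally entangled state `(1/√2) ∑ᵢ |ii⟩` one has `⟨ψ| A ⊗ B |ψ⟩ = tr (Aᵀ B) / 2`.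
Expanding the projections `(1 ± A)/2`, `(1 ± B)/2` of traceless observables, the marginal
terms vanish and the winning probability on inputs `(a, b)` becomes
`(1 + (-1)^(ab) · tr (Aₐᵀ B_b) / 2) / 2`. For the CHSH observables the correlation
`tr (Aₐᵀ B_b) / 2` is `(-1)^(ab) / √2`, so every input pair is won with probability
`(1 + 1/√2) / 2 = cos² (π/8)`.
-/

theorem sum_conj_mul_kronecker_mulVec_maxEntangled {ι R : Type*} [Fintype ι] [DecidableEq ι]
    [CommSemiring R] [StarRing R] (c : R) (A B : Matrix ι ι R) :
    ∑ p : ι × ι, (starRingEnd R) (if p.1 = p.2 then c else 0) *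
      ((kronecker A B) *ᵥ fun q : ι × ι => if q.1 = q.2 then c else 0) p
      = (starRingEnd R) c * c * (Aᵀ * B).trace := by
  simp only [mulVec, dotProduct, Fintype.sum_prod_type, kronecker, kroneckerMap_apply,
    apply_ite, map_zero, ite_mul, zero_mul, mul_zero, Finset.sum_ite_eq, Finset.mem_univ, if_true]
  simp only [trace, diag, mul_apply, transpose_apply, Finset.mul_sum]
  rw [Finset.sum_comm]
  exact Finset.sum_congr rfl fun i _ => Finset.sum_congr rfl fun k _ => by ring

theorem eprVec_expectation (A B : Matrix (Fin 2) (Fin 2) ℂ) :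
    ∑ i, (starRingEnd ℂ) (eprVec i) * ((kronecker A B) *ᵥ eprVec) i = (Aᵀ * B).trace / 2 := by
  have hc : (starRingEnd ℂ) (((Real.sqrt 2)⁻¹ : ℝ) : ℂ) * (((Real.sqrt 2)⁻¹ : ℝ) : ℂ) = 1 / 2 := by
    rw [Complex.conj_ofReal, ← Complex.ofReal_mul, ← mul_inv, Real.mul_self_sqrt zero_le_two]
    push_cast
    ring
  exact (sum_conj_mul_kronecker_mulVec_maxEntangled _ A B).trans (by rw [hc]; ring)

theorem eprVec_expectation_outcomeProj {A B : Matrix (Fin 2) (Fin 2) ℂ}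
    (hA : A.trace = 0) (hB : B.trace = 0) (x y : Bool) :
    ∑ i, (starRingEnd ℂ) (eprVec i) *
      ((kronecker (outcomeProj A x) (outcomeProj B y)) *ᵥ eprVec) i
      = (1 + (if x then -1 else 1) * (if y then -1 else 1) * ((Aᵀ * B).trace / 2)) / 4 := by
  rw [eprVec_expectation]
  simp only [outcomeProj, transpose_smul, transpose_add, transpose_one, smul_mul_smul, add_mul,
    mul_add, one_mul, mul_one, mul_smul, trace_add, trace_smul, trace_one, trace_transpose,
    hA, hB, Fintype.card_fin, smul_eq_mul]
  ring

theorem sum_ite_xor_eq (E : ℂ) (c : Bool) :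
    ∑ x : Bool, ∑ y : Bool, (if xor x y = c then
      (1 + (if x then -1 else 1) * (if y then -1 else 1) * E) / 4 else 0)
      = (1 + (if c then -1 else 1) * E) / 2 := by
  cases c <;> simp only [Fintype.sum_bool] <;> norm_num <;> ring

theorem eprVec_sum_ite_xor_expectation_outcomeProj {A B : Matrix (Fin 2) (Fin 2) ℂ}
    (hA : A.trace = 0) (hB : B.trace = 0) (c : Bool) :
    ∑ x : Bool, ∑ y : Bool, (if xor x y = c then
      ∑ i, (starRingEnd ℂ) (eprVec i) *
        ((kronecker (outcomeProj A x) (outcomeProj B y)) *ᵥ eprVec) i else 0)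
      = (1 + (if c then -1 else 1) * ((Aᵀ * B).trace / 2)) / 2 := by
  simp only [eprVec_expectation_outcomeProj hA hB, sum_ite_xor_eq]

theorem trace_pauliZ : pauliZ.trace = 0 := by simp [pauliZ, trace_fin_two]

theorem trace_pauliX : pauliX.trace = 0 := by simp [pauliX, trace_fin_two]

theorem trace_chshAliceObs (a : Bool) : (chshAliceObs a).trace = 0 := by
  cases a <;> simp [chshAliceObs, trace_pauliZ, trace_pauliX]

theorem trace_chshBobObs (b : Bool) : (chshBobObs b).trace = 0 := by
  cases b <;> simp [chshBobObs, trace_pauliZ, trace_pauliX]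

theorem trace_transpose_chshAliceObs_mul_chshBobObs_div_two (a b : Bool) :
    ((chshAliceObs a)ᵀ * chshBobObs b).trace / 2
      = (if a && b then -1 else 1) * (((Real.sqrt 2)⁻¹ : ℝ) : ℂ) := by
  cases a <;> cases b <;>
    simp [chshAliceObs, chshBobObs, pauliZ, pauliX, trace_fin_two, mul_apply, Fin.sum_univ_two]

theorem cos_sq_pi_div_eight : Real.cos (Real.pi / 8) ^ 2 = (1 + (Real.sqrt 2)⁻¹) / 2 := by
  rw [Real.cos_pi_div_eight, div_pow, Real.sq_sqrt (by positivity)]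
  field_simp
  rw [mul_add, Real.mul_self_sqrt zero_le_two]
  ring

/-- The standard quantum strategy for the CHSH game (EPR state, Alice measuring
σ_z or σ_x, Bob measuring `(σ_z ± σ_x)/√2`) wins with probability
`cos²(π/8)` on every input pair `(a,b)`: the total probability of outcomes
`(x,y)` with `x ⊕ y = a ∧ b` equals `cos²(π/8)`. -/
theorem chsh_quantum_value (a b : Bool) :
    ∑ x : Bool, ∑ y : Bool,
      (if xor x y = (a && b) then
        ∑ i : Fin 2 × Fin 2, (starRingEnd ℂ) (eprVec i) *
          ((Matrix.kronecker (outcomeProj (chshAliceObs a) x)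
            (outcomeProj (chshBobObs b) y)).mulVec eprVec) i
      else 0)
    = (((Real.cos (Real.pi / 8))^2 : ℝ) : ℂ) := by
  rw [eprVec_sum_ite_xor_expectation_outcomeProj (trace_chshAliceObs a) (trace_chshBobObs b),
    trace_transpose_chshAliceObs_mul_chshBobObs_div_two, cos_sq_pi_div_eight, ← mul_assoc]
  have hsign : ((if a && b then -1 else 1) * (if a && b then -1 else 1) : ℂ) = 1 := by
    split_ifs <;> norm_num
  rw [hsign]
  push_cast
  ring
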